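/- Two-token Permute-and-Flip watermark score: let V = {a, b}, Δ > 0, T > 0, logits u(a) = Δ, u(b) = 0, let r_a, r_b be i.i.d. Uniform(0,1), and let ŵ = argmax_{w∈V} ( u(w)/T − log r_w ). Then the expected test score satisfies E[ −log r_{ŵ} ] = 1 + (1/2)·exp(−Δ/T)·(1 + Δ/T). -/

import Mathlib

open Finset MeasureTheory

/-- The law of a family of i.i.d. `Uniform(0,1)` random variables indexed by `V`. -/
noncomputable def unifPi (V : Type*) [Fintype V] : Measure (V → ℝ) :=
  Measure.pi fun _ : V => volume.restrict (Set.Ioo (0 : ℝ) 1)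

/-- A choice of a maximizer of `f` over the (nonempty, finite) type `V`. -/
noncomputable def argmaxOn {V : Type*} [Fintype V] [Nonempty V] (f : V → ℝ) : V :=
  (Finset.exists_max_image Finset.univ f Finset.univ_nonempty).choose

section aux

open Set Real

lemma argmaxOn_le {V : Type*} [Fintype V] [Nonempty V] (f : V → ℝ) (w : V) :
    f w ≤ f (argmaxOn f) :=
  (Finset.exists_max_image Finset.univ f Finset.univ_nonempty).choose_spec.2 w
    (Finset.mem_univ w)

lemma neg_log_integrableOn_Ioc : IntegrableOn (fun x => -Real.log x) (Set.Ioc (0:ℝ) 1) := by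
  apply intervalIntegral.integrableOn_deriv_of_nonneg (g := fun x => x - x * Real.log x)
  · exact (continuous_id.sub Real.continuous_mul_log).continuousOn
  · intro x hx
    have h : HasDerivAt (fun x => x - x * Real.log x) (1 - (Real.log x + 1)) x :=
      (hasDerivAt_id x).sub (Real.hasDerivAt_mul_log hx.1.ne')
    convert h using 1
    ring
  · intro x hx
    simp only [neg_nonneg]
    exact Real.log_nonpos hx.1.le hx.2.le

lemma log_integrableOn_Ioc : IntegrableOn Real.log (Set.Ioc (0:ℝ) 1) := by
  exact neg_log_integrableOn_Ioc.neg.congr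
    (Filter.Eventually.of_forall fun x => by simp)

lemma integral_log_Ioc {t : ℝ} (ht0 : 0 < t) (ht1 : t ≤ 1) :
    ∫ y in Set.Ioc (0:ℝ) t, Real.log y = t * Real.log t - t := by
  have hint : IntervalIntegrable Real.log volume 0 t := by
    rw [intervalIntegrable_iff_integrableOn_Ioc_of_le ht0.le]
    exact log_integrableOn_Ioc.mono_set (Set.Ioc_subset_Ioc le_rfl ht1)
  have h := intervalIntegral.integral_eq_sub_of_hasDerivAt_of_tendsto
      (f := fun x => x * Real.log x - x) (f' := Real.log) ht0
      (fun x hx => by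
        have h' := (Real.hasDerivAt_mul_log hx.1.ne').sub (hasDerivAt_id x)
        convert h' using 1
        · funext y; simp only [Pi.sub_apply, id_eq]
        · ring)
      hint
      (by
        have hcont : Filter.Tendsto (fun x : ℝ => x * Real.log x - x) (nhds 0) (nhds 0) := by
          have := (Real.continuous_mul_log.sub continuous_id).tendsto 0
          simpa [Pi.sub_def] using this
        exact hcont.mono_left nhdsWithin_le_nhds)
      (by
        have hcont : Filter.Tendsto (fun x : ℝ => x * Real.log x - x) (nhds t)
            (nhds (t * Real.log t - t)) := (Real.continuous_mul_log.sub continuous_id).tendsto t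
        exact hcont.mono_left nhdsWithin_le_nhds)
  rw [intervalIntegral.integral_of_le ht0.le] at h
  rw [h]; simp

end aux

/-- Two-token Permute-and-Flip watermark score: for `V = {a, b}` with logits
`u a = Δ > 0`, `u b = 0` and `ŵ = argmax_w (u w / T − log r_w)` for i.i.d. uniform `r`,
the expected test score is `E[−log r_ŵ] = 1 + (1/2)·exp(−Δ/T)·(1 + Δ/T)`. -/
theorem pf_two_token_watermark_score {V : Type*} [Fintype V] [DecidableEq V] [Nonempty V]
    (a b : V) (hab : a ≠ b) (huniv : (Finset.univ : Finset V) = {a, b})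
    (Δ T : ℝ) (hΔ : 0 < Δ) (hT : 0 < T)
    (u : V → ℝ) (hua : u a = Δ) (hub : u b = 0) :
    ∫ r : V → ℝ, -Real.log (r (argmaxOn fun w => u w / T - Real.log (r w))) ∂(unifPi V)
      = 1 + (1 / 2) * Real.exp (-Δ / T) * (1 + Δ / T) := by
  classical
  have hmem : ∀ v : V, v = a ∨ v = b := by
    intro v
    have hv : v ∈ ({a, b} : Finset V) := huniv ▸ Finset.mem_univ v
    simpa using hv
  set μ : Measure ℝ := volume.restrict (Set.Ioo (0 : ℝ) 1) with hμ
  have hμIoo : ∀ s : Set ℝ, μ s = volume (s ∩ Set.Ioo 0 1) := fun s =>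
    Measure.restrict_apply' measurableSet_Ioo
  have hμprob : IsProbabilityMeasure μ := ⟨by rw [hμIoo]; simp [Real.volume_Ioo]⟩
  set c := Δ / T with hcdef
  have hc0 : 0 < c := div_pos hΔ hT
  -- the argmax on a two-point space
  have hargmax_a : ∀ f : V → ℝ, f b < f a → argmaxOn f = a := by
    intro f hf
    rcases hmem (argmaxOn f) with h | h
    · exact h
    · exfalso; have := argmaxOn_le f a; rw [h] at this; exact absurd this (not_le.mpr hf)
  have hargmax_b : ∀ f : V → ℝ, f a < f b → argmaxOn f = b := by
    intro f hf
    rcases hmem (argmaxOn f) with h | h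
    · exfalso; have := argmaxOn_le f b; rw [h] at this; exact absurd this (not_le.mpr hf)
    · exact h
  -- transfer to a product of two uniform measures
  let e : Fin 2 ≃ V :=
    { toFun := ![a, b]
      invFun := fun v => if v = a then 0 else 1
      left_inv := by intro i; fin_cases i <;> simp [hab, Ne.symm hab]
      right_inv := by
        intro v
        rcases hmem v with h | h <;> subst h
        · simp
        · simp [Ne.symm hab] }
  let E : (ℝ × ℝ) ≃ᵐ (V → ℝ) :=
    (MeasurableEquiv.piFinTwo fun _ => ℝ).symm.trans
      (MeasurableEquiv.piCongrLeft (fun _ => ℝ) e)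
  have hEa : ∀ p : ℝ × ℝ, E p a = p.1 := by
    intro p
    have : a = e 0 := by simp [e, Equiv.coe_fn_mk]
    rw [this]
    show (MeasurableEquiv.piCongrLeft (fun _ => ℝ) e)
        ((MeasurableEquiv.piFinTwo fun _ => ℝ).symm p) (e 0) = p.1
    rw [MeasurableEquiv.piCongrLeft, MeasurableEquiv.coe_mk,
      Equiv.piCongrLeft_apply_apply]
    simp [MeasurableEquiv.piFinTwo_symm_apply]
  have hEb : ∀ p : ℝ × ℝ, E p b = p.2 := by
    intro p
    have : b = e 1 := by simp [e, Equiv.coe_fn_mk]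
    rw [this]
    show (MeasurableEquiv.piCongrLeft (fun _ => ℝ) e)
        ((MeasurableEquiv.piFinTwo fun _ => ℝ).symm p) (e 1) = p.2
    rw [MeasurableEquiv.piCongrLeft, MeasurableEquiv.coe_mk,
      Equiv.piCongrLeft_apply_apply]
    simp [MeasurableEquiv.piFinTwo_symm_apply]
  have hEmp : MeasurePreserving E (μ.prod μ) (unifPi V) := by
    have h1 := MeasureTheory.measurePreserving_piCongrLeft (fun _ : V => μ) e
    have h2 := (MeasureTheory.measurePreserving_piFinTwo (fun _ : Fin 2 => μ)).symm
      (MeasurableEquiv.piFinTwo fun _ => ℝ)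
    exact h1.comp h2
  have key := hEmp.integral_comp E.measurableEmbedding
    (fun r => -Real.log (r (argmaxOn fun w => u w / T - Real.log (r w))))
  rw [show unifPi V = Measure.pi fun _ : V => μ from rfl] at key ⊢
  rw [← key]
  -- replace the integrand a.e. by an explicit piecewise function
  set G : ℝ × ℝ → ℝ :=
    fun p => if -Real.log p.2 < c - Real.log p.1 then -Real.log p.1 else -Real.log p.2 with hGdef
  have hNull : (μ.prod μ) {p : ℝ × ℝ | c - Real.log p.1 = -Real.log p.2} = 0 := by
    rw [Measure.measure_prod_null]
    · refine Filter.Eventually.of_forall fun x => ?_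
      show μ {y : ℝ | c - Real.log x = -Real.log y} = 0
      rw [hμIoo]
      refine measure_mono_null (fun y hy => ?_) (measure_singleton (Real.exp (Real.log x - c)))
      rcases hy with ⟨hy1, hy2⟩
      have : Real.log y = Real.log x - c := by
        have := hy1.out; linarith [this]
      have hy0 : (0:ℝ) < y := hy2.1
      rw [Set.mem_singleton_iff, ← this, Real.exp_log hy0]
    · have hm : Measurable fun p : ℝ × ℝ => c - Real.log p.1 + Real.log p.2 :=
        ((Real.measurable_log.comp measurable_fst).const_sub c).add
          (Real.measurable_log.comp measurable_snd)
      have : {p : ℝ × ℝ | c - Real.log p.1 = -Real.log p.2}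
          = (fun p : ℝ × ℝ => c - Real.log p.1 + Real.log p.2) ⁻¹' {0} := by
        ext p
        simp only [Set.mem_setOf_eq, Set.mem_preimage, Set.mem_singleton_iff]
        constructor <;> intro h <;> linarith
      rw [this]
      exact hm (measurableSet_singleton 0)
  have hae : (fun p : ℝ × ℝ =>
      -Real.log (E p (argmaxOn fun w => u w / T - Real.log (E p w)))) =ᵐ[μ.prod μ] G := by
    have hcompl : ∀ᵐ p ∂(μ.prod μ),
        p ∉ {p : ℝ × ℝ | c - Real.log p.1 = -Real.log p.2} :=
      (MeasureTheory.measure_eq_zero_iff_ae_notMem).mp hNull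
    filter_upwards [hcompl] with p hp
    have hne : c - Real.log p.1 ≠ -Real.log p.2 := hp
    rcases lt_or_gt_of_ne hne with h | h
    · -- f a < f b : argmax = b
      have harg : argmaxOn (fun w => u w / T - Real.log (E p w)) = b := by
        apply hargmax_b
        show u a / T - Real.log (E p a) < u b / T - Real.log (E p b)
        rw [hua, hub, hEa, hEb, zero_div, zero_sub]
        linarith
      rw [harg, hEb]
      simp only [hGdef]
      rw [if_neg (not_lt.mpr h.le)]
    · -- f b < f a : argmax = a
      have harg : argmaxOn (fun w => u w / T - Real.log (E p w)) = a := by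
        apply hargmax_a
        show u b / T - Real.log (E p b) < u a / T - Real.log (E p a)
        rw [hua, hub, hEa, hEb, zero_div, zero_sub]
        linarith
      rw [harg, hEa]
      simp only [hGdef]
      rw [if_pos h]
  rw [integral_congr_ae hae]
  -- integrability of G
  have hlogμ : Integrable Real.log μ := by
    rw [hμ]
    exact log_integrableOn_Ioc.mono_set Set.Ioo_subset_Ioc_self
  have hGmeas : Measurable G := by
    apply Measurable.ite
    · exact measurableSet_lt (Real.measurable_log.comp measurable_snd).neg
        ((Real.measurable_log.comp measurable_fst).const_sub c)
    · exact (Real.measurable_log.comp measurable_fst).neg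
    · exact (Real.measurable_log.comp measurable_snd).neg
  have hGint : Integrable G (μ.prod μ) := by
    have h1 : Integrable (fun p : ℝ × ℝ => |Real.log p.1| * 1 + 1 * |Real.log p.2|)
        (μ.prod μ) :=
      (hlogμ.abs.mul_prod (integrable_const 1)).add ((integrable_const 1).mul_prod hlogμ.abs)
    refine h1.mono' hGmeas.aestronglyMeasurable ?_
    refine Filter.Eventually.of_forall fun p => ?_
    simp only [hGdef]
    by_cases h : -Real.log p.2 < c - Real.log p.1
    · rw [if_pos h]
      have : ‖-Real.log p.1‖ = |Real.log p.1| := by simp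
      rw [this]; nlinarith [abs_nonneg (Real.log p.2), abs_nonneg (Real.log p.1)]
    · rw [if_neg h]
      have : ‖-Real.log p.2‖ = |Real.log p.2| := by simp
      rw [this]; nlinarith [abs_nonneg (Real.log p.2), abs_nonneg (Real.log p.1)]
  rw [MeasureTheory.integral_prod _ hGint]
  -- compute the inner integral for each x ∈ (0,1)
  have hinner : ∀ x ∈ Set.Ioo (0:ℝ) 1,
      (∫ y, G (x, y) ∂μ) = Real.exp (-c) * (1 + c) * x - Real.log x := by
    intro x hx
    obtain ⟨hx0, hx1⟩ := hx
    set t := x * Real.exp (-c) with htdef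
    have hexpc1 : Real.exp (-c) < 1 := Real.exp_lt_one_iff.mpr (neg_lt_zero.mpr hc0)
    have ht0 : 0 < t := mul_pos hx0 (Real.exp_pos _)
    have htx : t < x := by
      calc t = x * Real.exp (-c) := rfl
      _ < x * 1 := by exact mul_lt_mul_of_pos_left hexpc1 hx0
      _ = x := mul_one x
    have ht1 : t < 1 := htx.trans hx1
    have hlogt : Real.log t = Real.log x - c := by
      rw [htdef, Real.log_mul hx0.ne' (Real.exp_pos _).ne', Real.log_exp]
      ring
    have hcond : ∀ y ∈ Set.Ioo (0:ℝ) 1,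
        ((-Real.log y < c - Real.log x) ↔ t < y) := by
      intro y hy
      rw [← Real.log_lt_log_iff ht0 hy.1, hlogt]
      constructor <;> intro h <;> linarith
    rw [hμ]
    show (∫ y in Set.Ioo (0:ℝ) 1, G (x, y)) = _
    rw [MeasureTheory.setIntegral_congr_fun measurableSet_Ioo
      (g := fun y => if t < y then -Real.log x else -Real.log y)
      (fun y hy => by
        simp only [hGdef]
        exact if_congr (hcond y hy) rfl rfl)]
    rw [← Set.Ioc_union_Ioo_eq_Ioo ht0.le ht1]
    have hdisj : Disjoint (Set.Ioc (0:ℝ) t) (Set.Ioo t 1) := by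
      apply Set.disjoint_left.mpr
      rintro y ⟨_, hy2⟩ ⟨hy3, _⟩
      exact absurd hy3 (not_lt.mpr hy2)
    have hint1 : IntegrableOn (fun y => if t < y then -Real.log x else -Real.log y)
        (Set.Ioc (0:ℝ) t) := by
      apply ((neg_log_integrableOn_Ioc.mono_set
        (Set.Ioc_subset_Ioc le_rfl ht1.le))).congr_fun ?_ measurableSet_Ioc
      intro y hy
      show -Real.log y = if t < y then -Real.log x else -Real.log y
      rw [if_neg (not_lt.mpr hy.2)]
    have hint2 : IntegrableOn (fun y => if t < y then -Real.log x else -Real.log y)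
        (Set.Ioo t 1) := by
      have hconst : IntegrableOn (fun _ : ℝ => -Real.log x) (Set.Ioo t 1) := by
        exact integrableOn_const (by rw [Real.volume_Ioo]; exact ENNReal.ofReal_ne_top)
      exact hconst.congr_fun (fun y hy => (if_pos hy.1).symm) measurableSet_Ioo
    rw [MeasureTheory.setIntegral_union hdisj measurableSet_Ioo hint1 hint2]
    have hpart1 : (∫ y in Set.Ioc (0:ℝ) t, if t < y then -Real.log x else -Real.log y)
        = t - t * Real.log t := by
      rw [MeasureTheory.setIntegral_congr_fun measurableSet_Ioc
        (g := fun y => -Real.log y) (fun y hy => by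
          show (if t < y then -Real.log x else -Real.log y) = -Real.log y
          rw [if_neg (not_lt.mpr hy.2)])]
      rw [MeasureTheory.integral_neg, integral_log_Ioc ht0 ht1.le]
      ring
    have hpart2 : (∫ y in Set.Ioo t 1, if t < y then -Real.log x else -Real.log y)
        = (1 - t) * (-Real.log x) := by
      rw [MeasureTheory.setIntegral_congr_fun measurableSet_Ioo
        (g := fun _ => -Real.log x) (fun y hy => by
          show (if t < y then -Real.log x else -Real.log y) = -Real.log x
          rw [if_pos hy.1])]
      rw [MeasureTheory.setIntegral_const, Real.volume_real_Ioo_of_le (by linarith), smul_eq_mul]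
    rw [hpart1, hpart2, hlogt]
    have : t = Real.exp (-c) * x := by rw [htdef]; ring
    rw [this]
    ring
  rw [hμ]
  show (∫ x in Set.Ioo (0:ℝ) 1, ∫ y, G (x, y) ∂μ) = _
  rw [MeasureTheory.setIntegral_congr_fun measurableSet_Ioo
    (g := fun x => Real.exp (-c) * (1 + c) * x - Real.log x)
    (fun x hx => by rw [← hμ] at *; exact hinner x hx)]
  have hid : IntegrableOn (fun x : ℝ => Real.exp (-c) * (1 + c) * x) (Set.Ioo (0:ℝ) 1) :=
    ((continuous_const.mul continuous_id : Continuous fun x : ℝ =>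
      Real.exp (-c) * (1 + c) * x).integrableOn_Ioc).mono_set Set.Ioo_subset_Ioc_self
  have hlogIoo : IntegrableOn Real.log (Set.Ioo (0:ℝ) 1) :=
    log_integrableOn_Ioc.mono_set Set.Ioo_subset_Ioc_self
  rw [MeasureTheory.integral_sub hid hlogIoo]
  have hxint : (∫ x in Set.Ioo (0:ℝ) 1, Real.exp (-c) * (1 + c) * x)
      = Real.exp (-c) * (1 + c) * (1 / 2) := by
    rw [MeasureTheory.integral_const_mul, ← MeasureTheory.integral_Ioc_eq_integral_Ioo,
      ← intervalIntegral.integral_of_le (by norm_num : (0:ℝ) ≤ 1), integral_id]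
    norm_num
  have hlogint : (∫ x in Set.Ioo (0:ℝ) 1, Real.log x) = -1 := by
    rw [← MeasureTheory.integral_Ioc_eq_integral_Ioo,
      integral_log_Ioc one_pos le_rfl]
    simp
  rw [hxint, hlogint, hcdef]
  rw [show -Δ / T = -(Δ / T) by ring]
  ring
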